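/- Let q be a positive integer, z ∈ ℝ^q, S a symmetric positive semidefinite real q × q matrix, c > 0 a real number, and set ρ = (zᵀSz)/(c + zᵀSz). Let Y, A, B, A₀, B₀ be square-integrable real-valued random variables on a probability space, define T = A + ρ·(Y − A) and M = B + ρ·(Y − B), and set σ̃² = E[(Y−T)²] + E[(Y−M)²]. Then |E[(Y−T)²] − E[(Y−M)²]| ≤ 12·σ̃·√( max{ E[(A−A₀)²], E[(B−B₀)²], E[(A₀−B₀)²] } ). -/

import Mathlib

/-!
The prediction errors are shrunk plug-in errors, `Y - T = (1 - ρ)(Y - A)` and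
`Y - M = (1 - ρ)(Y - B)` with `0 ≤ ρ ≤ 1`. In `L²`, with `u = Y - T` and `v = Y - M`,
`|‖u‖² - ‖v‖²| ≤ ‖u - v‖ (‖u‖ + ‖v‖)`, where `‖u‖ + ‖v‖ ≤ 2σ̃` and
`u - v = (1 - ρ)(B - A)` has norm at most `‖A - A₀‖ + ‖A₀ - B₀‖ + ‖B₀ - B‖`.
This already gives the constant `6`.
-/

open MeasureTheory ProbabilityTheory Matrix

theorem abs_sq_norm_sub_sq_norm_le {E : Type*} [SeminormedAddCommGroup E] (u v : E) :
    |‖u‖ ^ 2 - ‖v‖ ^ 2| ≤ ‖u - v‖ * (‖u‖ + ‖v‖) := by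
  rw [sq_sub_sq, abs_mul, abs_of_nonneg (by positivity : 0 ≤ ‖u‖ + ‖v‖), mul_comm]
  exact mul_le_mul_of_nonneg_right (abs_norm_sub_norm_le u v) (by positivity)

theorem abs_sq_norm_sub_sub_sq_norm_sub_le {E : Type*} [SeminormedAddCommGroup E] {y t m : E}
    {σ : ℝ} (hσ : 0 ≤ σ) (hσ2 : σ ^ 2 = ‖y - t‖ ^ 2 + ‖y - m‖ ^ 2) :
    |‖y - t‖ ^ 2 - ‖y - m‖ ^ 2| ≤ 2 * σ * ‖t - m‖ := by
  have ht : ‖y - t‖ ≤ σ :=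
    (sq_le_sq₀ (norm_nonneg _) hσ).mp (hσ2 ▸ le_add_of_nonneg_right (by positivity))
  have hm : ‖y - m‖ ≤ σ :=
    (sq_le_sq₀ (norm_nonneg _) hσ).mp (hσ2 ▸ le_add_of_nonneg_left (by positivity))
  calc _ ≤ ‖(y - t) - (y - m)‖ * (‖y - t‖ + ‖y - m‖) := abs_sq_norm_sub_sq_norm_le _ _
    _ ≤ ‖t - m‖ * (2 * σ) := by
      rw [sub_sub_sub_cancel_left, norm_sub_rev]
      gcongr
      linarith
    _ = 2 * σ * ‖t - m‖ := mul_comm _ _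

theorem norm_sub_le_three_mul_max {E : Type*} [SeminormedAddCommGroup E] (a b a₀ b₀ : E) :
    ‖a - b‖ ≤ 3 * max (max ‖a - a₀‖ ‖b - b₀‖) ‖a₀ - b₀‖ := by
  have h := dist_triangle4 a a₀ b₀ b
  simp only [dist_eq_norm, norm_sub_rev b₀ b] at h
  linarith [le_max_left ‖a - a₀‖ ‖b - b₀‖, le_max_right ‖a - a₀‖ ‖b - b₀‖,
    le_max_left (max ‖a - a₀‖ ‖b - b₀‖) ‖a₀ - b₀‖, le_max_right (max ‖a - a₀‖ ‖b - b₀‖) ‖a₀ - b₀‖]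

theorem div_add_self_mem_Icc {c t : ℝ} (hc : 0 < c) (ht : 0 ≤ t) :
    t / (c + t) ∈ Set.Icc 0 1 :=
  ⟨by positivity, (div_le_one (by positivity)).mpr (by linarith)⟩

namespace MeasureTheory
variable {Ω : Type*} [MeasurableSpace Ω] {μ : Measure Ω} {f g : Ω → ℝ}

theorem integral_sq_const_mul_le {κ : ℝ} (hκ : |κ| ≤ 1) :
    ∫ ω, (κ * f ω) ^ 2 ∂μ ≤ ∫ ω, f ω ^ 2 ∂μ := by
  simp_rw [mul_pow]
  rw [integral_const_mul]
  exact mul_le_of_le_one_left (integral_nonneg fun _ => sq_nonneg _)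
    ((sq_le_one_iff_abs_le_one κ).mpr hκ)

theorem MemLp.integral_sq_eq_sq_norm_toLp (hf : MemLp f 2 μ) :
    ∫ ω, f ω ^ 2 ∂μ = ‖hf.toLp f‖ ^ 2 := by
  rw [← real_inner_self_eq_norm_sq, L2.inner_def]
  refine integral_congr_ae ?_
  filter_upwards [hf.coeFn_toLp] with ω hω
  simp [hω, sq]

theorem MemLp.integral_sq_sub_eq_sq_norm_sub (hf : MemLp f 2 μ) (hg : MemLp g 2 μ) :
    ∫ ω, (f ω - g ω) ^ 2 ∂μ = ‖hf.toLp f - hg.toLp g‖ ^ 2 := by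
  rw [← MemLp.toLp_sub]
  exact (hf.sub hg).integral_sq_eq_sq_norm_toLp

theorem MemLp.sqrt_integral_sq_sub_eq_norm_sub (hf : MemLp f 2 μ) (hg : MemLp g 2 μ) :
    √(∫ ω, (f ω - g ω) ^ 2 ∂μ) = ‖hf.toLp f - hg.toLp g‖ := by
  rw [hf.integral_sq_sub_eq_sq_norm_sub hg, Real.sqrt_sq (norm_nonneg _)]

end MeasureTheory

theorem mspe_diff_le_twelve_sigma_sqrt_max_general
    {q : ℕ} (z : Fin q → ℝ) (S : Matrix (Fin q) (Fin q) ℝ)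
    (hS : S.PosSemidef) (c : ℝ) (hc : 0 < c)
    (ρ : ℝ) (hρ : ρ = z ⬝ᵥ S.mulVec z / (c + z ⬝ᵥ S.mulVec z))
    {Ω : Type*} [MeasureSpace Ω] [IsProbabilityMeasure (ℙ : Measure Ω)]
    (Y A B A₀ B₀ : Ω → ℝ)
    (hY : MemLp Y 2 ℙ) (hA : MemLp A 2 ℙ) (hB : MemLp B 2 ℙ)
    (hA₀ : MemLp A₀ 2 ℙ) (hB₀ : MemLp B₀ 2 ℙ)
    (T M : Ω → ℝ)
    (hT : ∀ ω, T ω = A ω + ρ * (Y ω - A ω))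
    (hM : ∀ ω, M ω = B ω + ρ * (Y ω - B ω))
    (σ : ℝ) (hσ : 0 ≤ σ)
    (hσ2 : σ ^ 2 = (∫ ω, (Y ω - T ω) ^ 2) + ∫ ω, (Y ω - M ω) ^ 2) :
    |(∫ ω, (Y ω - T ω) ^ 2) - ∫ ω, (Y ω - M ω) ^ 2| ≤
      12 * σ * Real.sqrt (max (max (∫ ω, (A ω - A₀ ω) ^ 2) (∫ ω, (B ω - B₀ ω) ^ 2))
        (∫ ω, (A₀ ω - B₀ ω) ^ 2)) := by
  obtain ⟨hρ0, hρ1⟩ : ρ ∈ Set.Icc 0 1 :=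
    hρ ▸ div_add_self_mem_Icc hc (hS.dotProduct_mulVec_nonneg z)
  have hT2 : MemLp T 2 ℙ := funext hT ▸ hA.add ((hY.sub hA).const_mul ρ)
  have hM2 : MemLp M 2 ℙ := funext hM ▸ hB.add ((hY.sub hB).const_mul ρ)
  have hTM : ‖hT2.toLp T - hM2.toLp M‖ ≤ ‖hA.toLp A - hB.toLp B‖ := by
    rw [← hT2.sqrt_integral_sq_sub_eq_norm_sub hM2, ← hA.sqrt_integral_sq_sub_eq_norm_sub hB]
    refine Real.sqrt_le_sqrt (le_of_eq_of_le ?_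
      (integral_sq_const_mul_le (κ := 1 - ρ) (abs_le.mpr ⟨by linarith, by linarith⟩)))
    congr with ω
    rw [hT, hM]
    ring
  rw [hY.integral_sq_sub_eq_sq_norm_sub hT2, hY.integral_sq_sub_eq_sq_norm_sub hM2] at hσ2 ⊢
  rw [Real.sqrt_monotone.map_max, Real.sqrt_monotone.map_max,
    hA.sqrt_integral_sq_sub_eq_norm_sub hA₀, hB.sqrt_integral_sq_sub_eq_norm_sub hB₀,
    hA₀.sqrt_integral_sq_sub_eq_norm_sub hB₀]
  calc _ ≤ 2 * σ * ‖hT2.toLp T - hM2.toLp M‖ := abs_sq_norm_sub_sub_sq_norm_sub_le hσ hσ2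
    _ ≤ 2 * σ * (3 * _) := by
      gcongr
      exact hTM.trans (norm_sub_le_three_mul_max _ _ (hA₀.toLp A₀) (hB₀.toLp B₀))
    _ ≤ 12 * σ * _ := by
      ring_nf
      gcongr
      norm_num

/-- With shrinkage factor `ρ = zᵀSz/(c + zᵀSz)` (`S` PSD, `c > 0`), predictors
`T = A + ρ(Y−A)`, `M = B + ρ(Y−B)`, and `σ̃² = E[(Y−T)²] + E[(Y−M)²]`, one has
`|E[(Y−T)²] − E[(Y−M)²]| ≤ 12·σ̃·√(max{E[(A−A₀)²], E[(B−B₀)²], E[(A₀−B₀)²]})`. -/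
theorem mspe_diff_le_twelve_sigma_sqrt_max
    {q : ℕ} (hq : 0 < q) (z : Fin q → ℝ) (S : Matrix (Fin q) (Fin q) ℝ)
    (hS : S.PosSemidef) (c : ℝ) (hc : 0 < c)
    (ρ : ℝ) (hρ : ρ = z ⬝ᵥ S.mulVec z / (c + z ⬝ᵥ S.mulVec z))
    {Ω : Type*} [MeasureSpace Ω] [IsProbabilityMeasure (ℙ : Measure Ω)]
    (Y A B A₀ B₀ : Ω → ℝ)
    (hY : MemLp Y 2 ℙ) (hA : MemLp A 2 ℙ) (hB : MemLp B 2 ℙ)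
    (hA₀ : MemLp A₀ 2 ℙ) (hB₀ : MemLp B₀ 2 ℙ)
    (T M : Ω → ℝ)
    (hT : ∀ ω, T ω = A ω + ρ * (Y ω - A ω))
    (hM : ∀ ω, M ω = B ω + ρ * (Y ω - B ω))
    (σ : ℝ) (hσ : 0 ≤ σ)
    (hσ2 : σ ^ 2 = (∫ ω, (Y ω - T ω) ^ 2) + ∫ ω, (Y ω - M ω) ^ 2) :
    |(∫ ω, (Y ω - T ω) ^ 2) - ∫ ω, (Y ω - M ω) ^ 2| ≤
      12 * σ * Real.sqrt (max (max (∫ ω, (A ω - A₀ ω) ^ 2) (∫ ω, (B ω - B₀ ω) ^ 2))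
        (∫ ω, (A₀ ω - B₀ ω) ^ 2)) :=
  mspe_diff_le_twelve_sigma_sqrt_max_general z S hS c hc ρ hρ Y A B A₀ B₀ hY hA hB hA₀ hB₀ T M hT hM
    σ hσ hσ2
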